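/- arXiv:2503.00301 — 2 statements merged into one kernel-verified Lean document; each statement's English description precedes it below -/
import Mathlib

section
/- Suppose e_out[t] = W·e_in[t] + b for all t ≥ 1, where r_in[t] = r_in[t-1] + x_in[t]/t with r_in[0] = 0, e_in[t] = r_in[t-1] + x_in[t], and analogously r_out[t] = r_out[t-1] + x_out[t]/t with r_out[0] = b, e_out[t] = r_out[t-1] + x_out[t]. Then x_out[t] = W·x_in[t] for all t ≥ 1. -/
theorem differential_coding_linear_layer
    (W b : ℝ) (xin xout rin rout ein eout : ℕ → ℝ)
    (hrin0 : rin 0 = 0)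
    (hrin : ∀ t : ℕ, 1 ≤ t → rin t = rin (t - 1) + xin t / t)
    (hein : ∀ t : ℕ, 1 ≤ t → ein t = rin (t - 1) + xin t)
    (hrout0 : rout 0 = b)
    (hrout : ∀ t : ℕ, 1 ≤ t → rout t = rout (t - 1) + xout t / t)
    (heout : ∀ t : ℕ, 1 ≤ t → eout t = rout (t - 1) + xout t)
    (hlin : ∀ t : ℕ, 1 ≤ t → eout t = W * ein t + b) :
    ∀ t : ℕ, 1 ≤ t → xout t = W * xin t := by
  have key : ∀ t : ℕ, rout t = W * rin t + b ∧ (1 ≤ t → xout t = W * xin t) := by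
    intro t
    induction t with
    | zero => simp [hrout0, hrin0]
    | succ n ih =>
      have h1 : 1 ≤ n + 1 := Nat.le_add_left 1 n
      have hx : xout (n + 1) = W * xin (n + 1) := by
        have e1 := heout (n + 1) h1
        have e2 := hlin (n + 1) h1
        have e3 := hein (n + 1) h1
        simp only [Nat.add_sub_cancel] at e1 e3
        have := e1.symm.trans e2
        rw [e3, ih.1] at this
        linarith
      refine ⟨?_, fun _ => hx⟩
      have r1 := hrout (n + 1) h1
      have r2 := hrin (n + 1) h1
      simp only [Nat.add_sub_cancel] at r1 r2
      rw [r1, r2, hx, ih.1]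
      ring
  exact fun t ht => (key t).2 ht
end

section
/- Define L(k) = ∑_{i=1}^n [ √(π/2)·μ·erf(((2i−1)θk/(2n) − μ)/(√2σ)) − √(π/2)·((2i−1)θ/(2n))·erf(((2i−1)θk/(2n) − μ)/(√2σ)) − σ·e^{−((2i−1)θk/(2n) − μ)²/(2σ²)} ]. Then L is differentiable and L'(k) = ∑_{i=1}^n ((2i−1)²θ²/(4n²σ))·(k−1)·e^{−((2i−1)θk/(2n) − μ)²/(2σ²)}. In particular L'(k) < 0 for k < 1, L'(1) = 0, and L'(k) > 0 for k > 1, so L attains its unique global minimum at k = 1. -/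
/-!
Each summand of `L` has the form `√(π/2) (μ - a) erf((a k - μ)/(√2 σ)) - σ e^{-(a k - μ)²/(2σ²)}`
with `a = (2i - 1)θ/(2n) > 0`. Differentiating, the derivative of the Gaussian term cancels the
`μ`-part of the derivative of the `erf` term, leaving `(a²/σ) (k - 1) e^{-(a k - μ)²/(2σ²)}`.
Hence `L'` has the sign of `k - 1`, so `L` strictly decreases on `(-∞, 1]` and strictly increases
on `[1, ∞)`.
-/

noncomputable def erf (x : ℝ) : ℝ :=
  (2 / Real.sqrt Real.pi) * ∫ t in (0 : ℝ)..x, Real.exp (-t ^ 2)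

open Real Finset

lemma hasDerivAt_erf (x : ℝ) : HasDerivAt erf (2 / √π * exp (-x ^ 2)) x := by
  have hc : Continuous fun t : ℝ => exp (-t ^ 2) := by fun_prop
  exact (intervalIntegral.integral_hasDerivAt_right (hc.intervalIntegrable 0 x)
    (hc.stronglyMeasurableAtFilter _ _) hc.continuousAt).const_mul _

lemma hasDerivAt_erf_loss {σ : ℝ} (hσ : σ ≠ 0) (μ a k : ℝ) :
    HasDerivAt (fun k => √(π / 2) * μ * erf ((a * k - μ) / (√2 * σ))
      - √(π / 2) * a * erf ((a * k - μ) / (√2 * σ))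
      - σ * exp (-(a * k - μ) ^ 2 / (2 * σ ^ 2)))
    (a ^ 2 / σ * (k - 1) * exp (-(a * k - μ) ^ 2 / (2 * σ ^ 2))) k := by
  have hlin : HasDerivAt (fun k => a * k - μ) a k := by
    simpa using ((hasDerivAt_id k).const_mul a).sub_const μ
  have herf := (hasDerivAt_erf _).comp k (hlin.div_const (√2 * σ))
  have hquad : HasDerivAt (fun k => -(a * k - μ) ^ 2 / (2 * σ ^ 2))
      (-(2 * (a * k - μ) ^ 1 * a) / (2 * σ ^ 2)) k :=
    (hlin.pow 2).neg.div_const _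
  have hgauss := ((hasDerivAt_exp _).comp k hquad).const_mul σ
  have hsq : ((a * k - μ) / (√2 * σ)) ^ 2 = (a * k - μ) ^ 2 / (2 * σ ^ 2) := by
    rw [div_pow, mul_pow, sq_sqrt zero_le_two]
  rw [hsq] at herf
  refine (((herf.const_mul _).sub (herf.const_mul _)).sub hgauss).congr_deriv ?_
  have hπ : √(π / 2) = √π / √2 := sqrt_div pi_pos.le 2
  have h2 : √2 ^ 2 = 2 := sq_sqrt zero_le_two
  rw [hπ]
  field_simp
  ring_nf
  rw [h2]
  ring

lemma sum_mul_mul_pos {ι : Type*} {s : Finset ι} (hs : s.Nonempty) {c e : ι → ℝ}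
    (hc : ∀ i ∈ s, 0 < c i) (he : ∀ i ∈ s, 0 < e i) {x : ℝ} (hx : 0 < x) :
    0 < ∑ i ∈ s, c i * x * e i :=
  sum_pos (fun i hi => mul_pos (mul_pos (hc i hi) hx) (he i hi)) hs

lemma sum_mul_mul_neg {ι : Type*} {s : Finset ι} (hs : s.Nonempty) {c e : ι → ℝ}
    (hc : ∀ i ∈ s, 0 < c i) (he : ∀ i ∈ s, 0 < e i) {x : ℝ} (hx : x < 0) :
    ∑ i ∈ s, c i * x * e i < 0 :=
  sum_neg (fun i hi => mul_neg_of_neg_of_pos (mul_neg_of_pos_of_neg (hc i hi) hx) (he i hi)) hs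

lemma lt_of_hasDerivAt_neg_of_pos {f f' : ℝ → ℝ} {c : ℝ} (hf : ∀ x, HasDerivAt f (f' x) x)
    (hneg : ∀ x < c, f' x < 0) (hpos : ∀ x, c < x → 0 < f' x) {x : ℝ} (hx : x ≠ c) :
    f c < f x := by
  have hcont : Continuous f := continuous_iff_continuousAt.2 fun x => (hf x).continuousAt
  rcases hx.lt_or_gt with hxc | hcx
  · refine strictAntiOn_of_hasDerivWithinAt_neg (convex_Iic c) hcont.continuousOn
      (fun y _ => (hf y).hasDerivWithinAt) (fun y hy => hneg y ?_) hxc.le Set.self_mem_Iic hxc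
    simpa using hy
  · refine strictMonoOn_of_hasDerivWithinAt_pos (convex_Ici c) hcont.continuousOn
      (fun y _ => (hf y).hasDerivWithinAt) (fun y hy => hpos y ?_) Set.self_mem_Ici hcx.le hcx
    simpa using hy

theorem rounding_shift_optimal_at_one
    (n : ℕ) (hn : 1 ≤ n) (θ σ μ : ℝ) (hθ : 0 < θ) (hσ : 0 < σ)
    (L : ℝ → ℝ)
    (hL : ∀ k, L k = ∑ i ∈ Finset.Icc 1 n,
      (Real.sqrt (Real.pi / 2) * μ *
          erf (((2 * (i : ℝ) - 1) * θ * k / (2 * n) - μ) / (Real.sqrt 2 * σ))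
        - Real.sqrt (Real.pi / 2) * ((2 * (i : ℝ) - 1) * θ / (2 * n)) *
          erf (((2 * (i : ℝ) - 1) * θ * k / (2 * n) - μ) / (Real.sqrt 2 * σ))
        - σ * Real.exp (-((2 * (i : ℝ) - 1) * θ * k / (2 * n) - μ) ^ 2 / (2 * σ ^ 2)))) :
    (∀ k, HasDerivAt L
      (∑ i ∈ Finset.Icc 1 n,
        ((2 * (i : ℝ) - 1) ^ 2 * θ ^ 2 / (4 * (n : ℝ) ^ 2 * σ)) * (k - 1) *
          Real.exp (-((2 * (i : ℝ) - 1) * θ * k / (2 * n) - μ) ^ 2 / (2 * σ ^ 2))) k) ∧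
    (∀ k, k < 1 →
      (∑ i ∈ Finset.Icc 1 n,
        ((2 * (i : ℝ) - 1) ^ 2 * θ ^ 2 / (4 * (n : ℝ) ^ 2 * σ)) * (k - 1) *
          Real.exp (-((2 * (i : ℝ) - 1) * θ * k / (2 * n) - μ) ^ 2 / (2 * σ ^ 2))) < 0) ∧
    ((∑ i ∈ Finset.Icc 1 n,
        ((2 * (i : ℝ) - 1) ^ 2 * θ ^ 2 / (4 * (n : ℝ) ^ 2 * σ)) * ((1 : ℝ) - 1) *
          Real.exp (-((2 * (i : ℝ) - 1) * θ * 1 / (2 * n) - μ) ^ 2 / (2 * σ ^ 2))) = 0) ∧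
    (∀ k, 1 < k →
      0 < (∑ i ∈ Finset.Icc 1 n,
        ((2 * (i : ℝ) - 1) ^ 2 * θ ^ 2 / (4 * (n : ℝ) ^ 2 * σ)) * (k - 1) *
          Real.exp (-((2 * (i : ℝ) - 1) * θ * k / (2 * n) - μ) ^ 2 / (2 * σ ^ 2)))) ∧
    (∀ k, L 1 ≤ L k) ∧ (∀ k, k ≠ 1 → L 1 < L k) := by
  have hne : (Icc 1 n).Nonempty := nonempty_Icc.2 hn
  have hcoef : ∀ i ∈ Icc 1 n, 0 < (2 * (i : ℝ) - 1) ^ 2 * θ ^ 2 / (4 * (n : ℝ) ^ 2 * σ) := by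
    intro i hi
    have : (1 : ℝ) ≤ i := by exact_mod_cast (mem_Icc.1 hi).1
    have : 0 < 2 * (i : ℝ) - 1 := by linarith
    positivity
  have hexp : ∀ k, ∀ i ∈ Icc 1 n,
      0 < exp (-((2 * (i : ℝ) - 1) * θ * k / (2 * n) - μ) ^ 2 / (2 * σ ^ 2)) :=
    fun _ _ _ => exp_pos _
  have hderiv : ∀ k, HasDerivAt L (∑ i ∈ Icc 1 n,
      ((2 * (i : ℝ) - 1) ^ 2 * θ ^ 2 / (4 * (n : ℝ) ^ 2 * σ)) * (k - 1) *
        exp (-((2 * (i : ℝ) - 1) * θ * k / (2 * n) - μ) ^ 2 / (2 * σ ^ 2))) k := by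
    intro k
    rw [show L = _ from funext hL]
    refine HasDerivAt.fun_sum fun i _ => ?_
    have h := hasDerivAt_erf_loss hσ.ne' μ ((2 * (i : ℝ) - 1) * θ / (2 * n)) k
    simp only [← mul_div_right_comm] at h
    exact h.congr_deriv (by field_simp; ring)
  have hneg := fun k (hk : k < 1) => sum_mul_mul_neg hne hcoef (hexp k) (sub_neg.2 hk)
  have hpos := fun k (hk : 1 < k) => sum_mul_mul_pos hne hcoef (hexp k) (sub_pos.2 hk)
  have hlt := fun k => lt_of_hasDerivAt_neg_of_pos hderiv hneg hpos (x := k)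
  refine ⟨hderiv, hneg, by simp, hpos, fun k => ?_, hlt⟩
  rcases eq_or_ne k 1 with rfl | hk
  · exact le_rfl
  · exact (hlt k hk).le
end
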